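/- Let G ∈ L∞^{2×2}(ℝ) with det G admitting a canonical bounded factorization det G = d₋d₊ with d± invertible in H∞±. Then ker T_G = {0} if and only if ker T_{Ḡᵀ} = {0}. -/

import Mathlib

open MeasureTheory Complex Filter Set Matrix

noncomputable section
open scoped Classical

/-- The open upper half-plane. -/
def UHP : Set ℂ := {z : ℂ | 0 < z.im}

/-- The open lower half-plane. -/
def LHP : Set ℂ := {z : ℂ | z.im < 0}

/-- The Hardy space `H₂⁺` of the upper half-plane, viewed as boundary functions on `ℝ`:
square-integrable functions that arise as a.e. vertical boundary limits of a holomorphic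
function on `ℂ⁺` with uniformly bounded `L²`-means on horizontal lines. -/
def H2p : Set (ℝ → ℂ) :=
  {f | MemLp f 2 (volume : Measure ℝ) ∧ ∃ F : ℂ → ℂ,
    DifferentiableOn ℂ F UHP ∧
    (∃ C : ℝ, ∀ y : ℝ, 0 < y → ∫ x : ℝ, ‖F (x + y * Complex.I)‖ ^ 2 ≤ C) ∧
    (∀ᵐ x : ℝ ∂volume, Tendsto (fun y : ℝ => F (x + y * Complex.I))
      (nhdsWithin 0 (Ioi 0)) (nhds (f x)))}

/-- The Hardy space `H₂⁻` of the lower half-plane, as boundary functions on `ℝ`. -/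
def H2m : Set (ℝ → ℂ) :=
  {f | MemLp f 2 (volume : Measure ℝ) ∧ ∃ F : ℂ → ℂ,
    DifferentiableOn ℂ F LHP ∧
    (∃ C : ℝ, ∀ y : ℝ, y < 0 → ∫ x : ℝ, ‖F (x + y * Complex.I)‖ ^ 2 ≤ C) ∧
    (∀ᵐ x : ℝ ∂volume, Tendsto (fun y : ℝ => F (x + y * Complex.I))
      (nhdsWithin 0 (Iio 0)) (nhds (f x)))}

/-- `H∞⁺`: boundary functions of bounded holomorphic functions on the upper half-plane. -/
def HinfP : Set (ℝ → ℂ) :=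
  {f | ∃ F : ℂ → ℂ, DifferentiableOn ℂ F UHP ∧
    (∃ C : ℝ, ∀ z ∈ UHP, ‖F z‖ ≤ C) ∧
    (∀ᵐ x : ℝ ∂volume, Tendsto (fun y : ℝ => F (x + y * Complex.I))
      (nhdsWithin 0 (Ioi 0)) (nhds (f x)))}

/-- `H∞⁻`: boundary functions of bounded holomorphic functions on the lower half-plane. -/
def HinfM : Set (ℝ → ℂ) :=
  {f | ∃ F : ℂ → ℂ, DifferentiableOn ℂ F LHP ∧
    (∃ C : ℝ, ∀ z ∈ LHP, ‖F z‖ ≤ C) ∧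
    (∀ᵐ x : ℝ ∂volume, Tendsto (fun y : ℝ => F (x + y * Complex.I))
      (nhdsWithin 0 (Iio 0)) (nhds (f x)))}

/-- An inner function: an `H∞⁺` function of unit modulus a.e. on `ℝ`. -/
def IsInner (θ : ℝ → ℂ) : Prop := θ ∈ HinfP ∧ ∀ᵐ x : ℝ ∂volume, ‖θ x‖ = 1

/-- `a` divides `b` in `H∞⁺` (for inner functions: `a ⪯ b`). -/
def InnerDiv (a b : ℝ → ℂ) : Prop := ∃ c ∈ HinfP, ∀ᵐ x : ℝ ∂volume, b x = a x * c x

/-- The model space `K_θ = H₂⁺ ∩ θ H₂⁻`. -/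
def Kmodel (θ : ℝ → ℂ) : Set (ℝ → ℂ) :=
  {f | f ∈ H2p ∧ ∃ g ∈ H2m, ∀ᵐ x : ℝ ∂volume, f x = θ x * g x}

/-- The kernel of the Toeplitz operator with `2 × 2` symbol `G`: those `φ ∈ (H₂⁺)²`
with `Gφ ∈ (L₂)²` and `P⁺(Gφ) = 0`, i.e. `Gφ ∈ (H₂⁻)²`. -/
def kerT2 (G : Matrix (Fin 2) (Fin 2) (ℝ → ℂ)) : Set (Fin 2 → ℝ → ℂ) :=
  {φ | (∀ i, φ i ∈ H2p) ∧ ∀ i, (fun x => ∑ j : Fin 2, G i j x * φ j x) ∈ H2m}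

/-- The kernel of the Toeplitz operator with scalar symbol `g`: those `φ ∈ H₂⁺`
with `g·φ ∈ H₂⁻`. -/
def kerTs (g : ℝ → ℂ) : Set (ℝ → ℂ) :=
  {f | f ∈ H2p ∧ ∃ v ∈ H2m, ∀ᵐ x : ℝ ∂volume, g x * f x = v x}

/-- An outer function in `H∞⁺`, characterized by `O·H₂⁺` being dense in `H₂⁺`. -/
def IsOuter (O : ℝ → ℂ) : Prop :=
  O ∈ HinfP ∧ ∀ g ∈ H2p, ∀ ε : ℝ, 0 < ε → ∃ f ∈ H2p,
    eLpNorm (fun x => O x * f x - g x) 2 (volume : Measure ℝ) < ENNReal.ofReal ε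

/-- The kernel of the truncated Toeplitz operator `A_h^θ` on the model space `K_θ`:
`φ ∈ K_θ` with `P_θ(hφ) = 0`, i.e. `hφ ∈ θH₂⁺ ⊕ H₂⁻`. -/
def kerTTO (h θ : ℝ → ℂ) : Set (ℝ → ℂ) :=
  {φ | φ ∈ Kmodel θ ∧ ∃ u ∈ H2p, ∃ v ∈ H2m,
    ∀ᵐ x : ℝ ∂volume, h x * φ x = θ x * u x + v x}

/-- A finite Blaschke product (for the upper half-plane) of degree `n`. -/
def IsFBPdeg (θ : ℝ → ℂ) (n : ℕ) : Prop :=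
  ∃ (c : ℂ) (a : Fin n → ℂ), ‖c‖ = 1 ∧ (∀ k, 0 < (a k).im) ∧
    ∀ᵐ x : ℝ ∂volume,
      θ x = c * ∏ k : Fin n, ((x : ℂ) - a k) / ((x : ℂ) - starRingEnd ℂ (a k))

/-- A finite Blaschke product of some degree. -/
def IsFBP (θ : ℝ → ℂ) : Prop := ∃ n : ℕ, IsFBPdeg θ n

/-- The function `r(ξ) = (ξ - i)/(ξ + i)`. -/
def rfun : ℝ → ℂ := fun x => ((x : ℂ) - Complex.I) / ((x : ℂ) + Complex.I)

/-- The singular inner function `ξ ↦ e^{iμξ}`. -/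
def efun (μ : ℝ) : ℝ → ℂ := fun x => Complex.exp (Complex.I * μ * x)

/-- The Smirnov class `N⁺` of the upper half-plane, as boundary functions:
quotients `g/h` with `g, h ∈ H∞⁺` and `h` outer. -/
def SmirnovP (f : ℝ → ℂ) : Prop :=
  ∃ g ∈ HinfP, ∃ h : ℝ → ℂ, IsOuter h ∧ ∀ᵐ x : ℝ ∂volume, f x * h x = g x

/-- Map a function to its class in `L²(ℝ)` (zero if it is not in `L²`). -/
def toL2 (f : ℝ → ℂ) : Lp ℂ 2 (volume : Measure ℝ) :=
  if hf : MemLp f 2 (volume : Measure ℝ) then hf.toLp f else 0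

/-- Map a pair of functions to the corresponding pair of `L²` classes. -/
def Qmap (φ : Fin 2 → ℝ → ℂ) : Fin 2 → Lp ℂ 2 (volume : Measure ℝ) :=
  fun i => toL2 (φ i)

end

/-!
If `Ḡᵀψ₊ = ψ₋` with `ψ₊ ∈ (H₂⁺)²` and `ψ₋ ∈ (H₂⁻)²`, then `φ₊ := d₊⁻¹ J conj ψ₋` lies in
`(H₂⁺)²` and `Gφ₊ = d₋ J conj ψ₊` lies in `(H₂⁻)²`, because `G J Gᵀ = det G · J` and
`det G = d₋d₊`. So if `ker T_G = {0}` then `ψ₋ = 0`, hence `ψ₊ = 0` since `det G ≠ 0` a.e. The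
converse is the same argument for `Ḡᵀ`, whose determinant factors as `conj d₊ · conj d₋` with the
roles of `H∞±` exchanged.

The analytic input is that multiplication by an invertible `H∞⁺` function preserves `H₂⁺` (and
`H₂⁻` is reduced to `H₂⁺` by conjugation). With the boundary-value definition of `H₂⁺` this needs
the holomorphic extension of the multiplier to be bounded below, which comes from the uniqueness
theorem: a bounded holomorphic function on `ℂ⁺` with vertical boundary limits `0` a.e. vanishes.
For that, integrate it against Gaussian-weighted characters, shift the line of integration down to
`ℝ`, and conclude by injectivity of the Fourier transform.
-/

open MeasureTheory Complex Filter Set Matrix Topology ComplexConjugate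
open scoped Real FourierTransform

lemma isOpen_UHP : IsOpen UHP := isOpen_lt continuous_const continuous_im

lemma isOpen_LHP : IsOpen LHP := isOpen_lt continuous_im continuous_const

lemma mapsTo_conj_UHP : MapsTo conj UHP LHP := fun z hz => by simpa [UHP, LHP] using hz

lemma mapsTo_conj_LHP : MapsTo conj LHP UHP := fun z hz => by simpa [UHP, LHP] using hz

lemma add_mul_I_mem_UHP (x : ℝ) {y : ℝ} (hy : 0 < y) : (x + y * I : ℂ) ∈ UHP := by
  simp [UHP, hy]

lemma ContinuousOn.comp_add_mul_I {F : ℂ → ℂ} {s : Set ℂ} (hF : ContinuousOn F s) {y : ℝ}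
    (hy : ∀ x : ℝ, (x + y * I : ℂ) ∈ s) : Continuous fun x : ℝ => F (x + y * I) :=
  hF.comp_continuous (by fun_prop) hy

lemma conj_add_mul_I (x y : ℝ) : conj (x + y * I : ℂ) = x + ↑(-y) * I := by
  simp

lemma DifferentiableOn.conj_comp_conj {F : ℂ → ℂ} {s t : Set ℂ} (hF : DifferentiableOn ℂ F s)
    (hs : IsOpen s) (hts : MapsTo conj t s) :
    DifferentiableOn ℂ (fun z => conj (F (conj z))) t := fun z hz =>
  (conj_conj z ▸ ((hF _ (hts hz)).differentiableAt (hs.mem_nhds (hts hz))).conj_conj)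
    |>.differentiableWithinAt

lemma Filter.Tendsto.conj_comp_conj_add_mul_I {F : ℂ → ℂ} {x : ℝ} {s : Set ℝ} {a : ℂ}
    (h : Tendsto (fun y : ℝ => F (x + y * I)) (𝓝[s] 0) (𝓝 a)) :
    Tendsto (fun y : ℝ => conj (F (conj (x + y * I)))) (𝓝[-s] 0) (𝓝 (conj a)) := by
  have hneg : Tendsto (fun y : ℝ => -y) (𝓝[-s] 0) (𝓝[s] 0) := by
    simpa using continuous_neg.continuousWithinAt.tendsto_nhdsWithin
      (x := (0 : ℝ)) fun y (hy : y ∈ -s) => hy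
  simp_rw [conj_add_mul_I]
  exact (continuous_conj.tendsto a).comp (h.comp hneg)

lemma integral_norm_conj_comp_conj_sq (F : ℂ → ℂ) (y : ℝ) :
    ∫ x : ℝ, ‖conj (F (conj (x + y * I)))‖ ^ 2 = ∫ x : ℝ, ‖F (x + ↑(-y) * I)‖ ^ 2 := by
  simp_rw [conj_add_mul_I, RCLike.norm_conj]

lemma conj_mem_H2m {f : ℝ → ℂ} (hf : f ∈ H2p) : (fun x => conj (f x)) ∈ H2m := by
  obtain ⟨hL2, F, hF, ⟨C, hC⟩, hlim⟩ := hf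
  refine ⟨hL2.star, fun z => conj (F (conj z)), hF.conj_comp_conj isOpen_UHP mapsTo_conj_LHP,
    ⟨C, fun y hy => ?_⟩, hlim.mono fun x hx => ?_⟩
  · rw [integral_norm_conj_comp_conj_sq]
    exact hC _ (neg_pos.2 hy)
  · simpa [neg_Ioi] using hx.conj_comp_conj_add_mul_I

lemma conj_mem_H2p {f : ℝ → ℂ} (hf : f ∈ H2m) : (fun x => conj (f x)) ∈ H2p := by
  obtain ⟨hL2, F, hF, ⟨C, hC⟩, hlim⟩ := hf
  refine ⟨hL2.star, fun z => conj (F (conj z)), hF.conj_comp_conj isOpen_LHP mapsTo_conj_UHP,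
    ⟨C, fun y hy => ?_⟩, hlim.mono fun x hx => ?_⟩
  · rw [integral_norm_conj_comp_conj_sq]
    exact hC _ (neg_neg_iff_pos.2 hy)
  · simpa [neg_Iio] using hx.conj_comp_conj_add_mul_I

lemma conj_mem_HinfM {f : ℝ → ℂ} (hf : f ∈ HinfP) : (fun x => conj (f x)) ∈ HinfM := by
  obtain ⟨F, hF, ⟨C, hC⟩, hlim⟩ := hf
  refine ⟨fun z => conj (F (conj z)), hF.conj_comp_conj isOpen_UHP mapsTo_conj_LHP,
    ⟨C, fun z hz => ?_⟩, hlim.mono fun x hx => ?_⟩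
  · simpa using hC _ (mapsTo_conj_LHP hz)
  · simpa [neg_Ioi] using hx.conj_comp_conj_add_mul_I

lemma conj_mem_HinfP {f : ℝ → ℂ} (hf : f ∈ HinfM) : (fun x => conj (f x)) ∈ HinfP := by
  obtain ⟨F, hF, ⟨C, hC⟩, hlim⟩ := hf
  refine ⟨fun z => conj (F (conj z)), hF.conj_comp_conj isOpen_LHP mapsTo_conj_UHP,
    ⟨C, fun z hz => ?_⟩, hlim.mono fun x hx => ?_⟩
  · simpa using hC _ (mapsTo_conj_UHP hz)
  · simpa [neg_Iio] using hx.conj_comp_conj_add_mul_I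

lemma neg_mem_H2p {f : ℝ → ℂ} (hf : f ∈ H2p) : (fun x => -f x) ∈ H2p := by
  obtain ⟨hL2, F, hF, ⟨C, hC⟩, hlim⟩ := hf
  exact ⟨hL2.neg, -F, hF.neg, ⟨C, by simpa using hC⟩, hlim.mono fun x hx => hx.neg⟩

lemma mem_H2m_of_ae_eq {f g : ℝ → ℂ} (hf : f ∈ H2m) (hfg : f =ᵐ[volume] g) : g ∈ H2m := by
  obtain ⟨hL2, F, hF, hC, hlim⟩ := hf
  refine ⟨hL2.ae_eq hfg, F, hF, hC, ?_⟩
  filter_upwards [hlim, hfg] with x hx hfgx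
  rwa [hfgx] at hx

lemma aestronglyMeasurable_of_tendsto_UHP {f : ℝ → ℂ} {F : ℂ → ℂ} (hF : ContinuousOn F UHP)
    (hlim : ∀ᵐ x : ℝ, Tendsto (fun y : ℝ => F (x + y * I)) (𝓝[>] 0) (𝓝 (f x))) :
    AEStronglyMeasurable f volume := by
  have hseq : Tendsto (fun n : ℕ => (1 : ℝ) / (n + 1)) atTop (𝓝[>] 0) :=
    tendsto_nhdsWithin_iff.2 ⟨tendsto_one_div_add_atTop_nhds_zero_nat,
      Eventually.of_forall fun n => mem_Ioi.2 Nat.one_div_pos_of_nat⟩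
  refine aestronglyMeasurable_of_tendsto_ae atTop (fun n => ?_) (hlim.mono fun x hx => hx.comp hseq)
  exact (hF.comp_add_mul_I fun x => add_mul_I_mem_UHP x Nat.one_div_pos_of_nat).aestronglyMeasurable

lemma memLp_top_of_mem_HinfP {f : ℝ → ℂ} (hf : f ∈ HinfP) : MemLp f ⊤ volume := by
  obtain ⟨F, hF, ⟨C, hC⟩, hlim⟩ := hf
  refine memLp_top_of_bound (aestronglyMeasurable_of_tendsto_UHP hF.continuousOn hlim) C
    (hlim.mono fun x hx => le_of_tendsto hx.norm ?_)
  exact eventually_nhdsWithin_of_forall fun y hy => hC _ (add_mul_I_mem_UHP x hy)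

lemma norm_cexp_gaussian_le {t Y x y : ℝ} (hy : 0 ≤ y) (hyY : y ≤ Y) :
    ‖cexp (-(x + y * I) ^ 2 + t * (x + y * I - Y * I) * I)‖
      ≤ rexp (Y ^ 2 + |t| * Y) * rexp (-x ^ 2) := by
  rw [norm_exp, ← Real.exp_add, Real.exp_le_exp]
  simp only [sq, add_re, neg_re, mul_re, mul_im, sub_re, sub_im, add_im, ofReal_re, ofReal_im,
    I_re, I_im]
  nlinarith [mul_le_mul_of_nonneg_right (le_abs_self t) (sub_nonneg.2 hyY), abs_nonneg t]

lemma integrable_mul_exp_neg_sq (C : ℝ) : Integrable fun x : ℝ => C * rexp (-x ^ 2) :=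
  (by simpa using integrable_exp_neg_mul_sq one_pos : Integrable fun x : ℝ => rexp (-x ^ 2))
    |>.const_mul C

lemma tendsto_mul_exp_neg_sq_cocompact (C : ℝ) :
    Tendsto (fun x : ℝ => C * rexp (-x ^ 2)) (cocompact ℝ) (𝓝 0) := by
  have hsq : Tendsto (fun x : ℝ => x ^ 2) (cocompact ℝ) atTop := by
    have := (tendsto_pow_atTop two_ne_zero).comp (tendsto_norm_cocompact_atTop (E := ℝ))
    simpa only [Function.comp_def, Real.norm_eq_abs, sq_abs] using this
  simpa using (Real.tendsto_exp_atBot.comp (tendsto_neg_atTop_atBot.comp hsq)).const_mul C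

theorem integral_add_mul_I_eq_of_differentiableOn {f : ℂ → ℂ} {g : ℝ → ℝ} {a b : ℝ}
    (hab : a ≤ b) (hf : DifferentiableOn ℂ f {z | z.im ∈ Icc a b}) (hg : Integrable g)
    (hg0 : Tendsto g (cocompact ℝ) (𝓝 0)) (hfg : ∀ x : ℝ, ∀ y ∈ Icc a b, ‖f (x + y * I)‖ ≤ g x) :
    ∫ x : ℝ, f (x + a * I) = ∫ x : ℝ, f (x + b * I) := by
  have hline : ∀ y ∈ Icc a b, Tendsto (fun R : ℝ => ∫ x in -R..R, f (x + y * I)) atTop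
      (𝓝 (∫ x : ℝ, f (x + y * I))) := fun y hy =>
    intervalIntegral_tendsto_integral
      (hg.mono' (hf.continuousOn.comp_add_mul_I fun x => by simpa using hy).aestronglyMeasurable
        (Eventually.of_forall fun x => hfg x y hy))
      tendsto_neg_atTop_atBot tendsto_id
  have hside : ∀ s : ℝ → ℝ, Tendsto s atTop (cocompact ℝ) →
      Tendsto (fun R => ∫ y in a..b, f (s R + y * I)) atTop (𝓝 0) := fun s hs => by
    refine squeeze_zero_norm (fun R => intervalIntegral.norm_integral_le_of_norm_le_const
      fun y hy => hfg (s R) y (Ioc_subset_Icc_self (uIoc_of_le hab ▸ hy))) ?_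
    simpa using (hg0.comp hs).mul_const |b - a|
  have hrect : ∀ R : ℝ, (∫ x in -R..R, f (x + a * I)) - (∫ x in -R..R, f (x + b * I))
      + I • (∫ y in a..b, f (R + y * I)) - I • (∫ y in a..b, f (↑(-R) + y * I)) = 0 := fun R => by
    simpa using integral_boundary_rect_eq_zero_of_differentiableOn f (-R + a * I) (R + b * I)
      (hf.mono fun z hz => by simpa [uIcc_of_le hab] using hz.2)
  have hlim := (((hline a ⟨le_rfl, hab⟩).sub (hline b ⟨hab, le_rfl⟩)).add
    ((hside id atTop_le_cocompact).const_smul I)).sub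
    ((hside Neg.neg (tendsto_neg_atTop_atBot.mono_right atBot_le_cocompact)).const_smul I)
  have := tendsto_nhds_unique (hlim.congr hrect) tendsto_const_nhds
  simpa [sub_eq_zero] using this

theorem integral_add_mul_I_eq_zero_of_tendsto {f : ℂ → ℂ} {g : ℝ → ℝ} {Y : ℝ} (hY : 0 < Y)
    (hf : DifferentiableOn ℂ f UHP) (hg : Integrable g) (hg0 : Tendsto g (cocompact ℝ) (𝓝 0))
    (hfg : ∀ x : ℝ, ∀ y ∈ Ioc 0 Y, ‖f (x + y * I)‖ ≤ g x)
    (hlim : ∀ᵐ x : ℝ, Tendsto (fun y : ℝ => f (x + y * I)) (𝓝[>] 0) (𝓝 0)) :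
    ∫ x : ℝ, f (x + Y * I) = 0 := by
  have hIoo : Ioo 0 Y ∈ 𝓝[>] (0 : ℝ) := Ioo_mem_nhdsGT hY
  have hshift : ∀ ε ∈ Ioo 0 Y, ∫ x : ℝ, f (x + ε * I) = ∫ x : ℝ, f (x + Y * I) := fun ε hε =>
    integral_add_mul_I_eq_of_differentiableOn hε.2.le
      (hf.mono fun z hz => show 0 < z.im from hε.1.trans_le hz.1) hg hg0
      fun x y hy => hfg x y ⟨hε.1.trans_le hy.1, hy.2⟩
  have hto0 : Tendsto (fun ε : ℝ => ∫ x : ℝ, f (x + ε * I)) (𝓝[>] 0) (𝓝 0) := by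
    refine integral_zero (α := ℝ) (G := ℂ) ▸ tendsto_integral_filter_of_dominated_convergence g
      ?_ ?_ hg hlim
    · filter_upwards [self_mem_nhdsWithin] with ε hε
      exact (hf.continuousOn.comp_add_mul_I fun x => add_mul_I_mem_UHP x hε).aestronglyMeasurable
    · filter_upwards [hIoo] with ε hε
      exact Eventually.of_forall fun x => hfg x ε ⟨hε.1, hε.2.le⟩
  exact tendsto_nhds_unique (tendsto_const_nhds.congr' <|
    eventually_of_mem hIoo fun ε hε => (hshift ε hε).symm) hto0

theorem eq_zero_of_integral_exp_mul_eq_zero {g : ℝ → ℂ} (hc : Continuous g) (hi : Integrable g)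
    (h : ∀ t : ℝ, ∫ x : ℝ, cexp (↑(t * x) * I) * g x = 0) : g = 0 := by
  have hF : 𝓕 g = 0 := funext fun w => by
    rw [Real.fourier_real_eq_integral_exp_smul]
    simpa [mul_comm, mul_left_comm, mul_assoc] using h (-2 * π * w)
  have hinv := hc.fourierInv_fourier_eq hi (hF ▸ integrable_zero _ _ _)
  rw [hF] at hinv
  funext x
  simp [← hinv, Real.fourierInv_eq]

theorem eqOn_zero_of_tendsto_zero {v : ℂ → ℂ} {M : ℝ} (hv : DifferentiableOn ℂ v UHP)
    (hM : ∀ z ∈ UHP, ‖v z‖ ≤ M)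
    (hlim : ∀ᵐ x : ℝ, Tendsto (fun y : ℝ => v (x + y * I)) (𝓝[>] 0) (𝓝 0)) :
    EqOn v 0 UHP := by
  intro z (hz : 0 < z.im)
  set Y := z.im
  -- The Gaussian factor makes every horizontal line integral converge; the phase is normalised
  -- so that on the line `im = Y` it is the character `x ↦ exp (i t x)`.
  set f : ℝ → ℂ → ℂ := fun t ζ => cexp (-ζ ^ 2 + t * (ζ - Y * I) * I) * v ζ with hf_def
  have hf : ∀ t, DifferentiableOn ℂ (f t) UHP := fun t =>
    (Differentiable.differentiableOn (by fun_prop)).mul hv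
  have hbound : ∀ t (x : ℝ), ∀ y ∈ Ioc 0 Y,
      ‖f t (x + y * I)‖ ≤ M * rexp (Y ^ 2 + |t| * Y) * rexp (-x ^ 2) := fun t (x : ℝ) y hy => by
    refine (norm_mul _ _).trans_le <| (mul_le_mul (norm_cexp_gaussian_le hy.1.le hy.2)
      (hM _ (add_mul_I_mem_UHP x hy.1)) (norm_nonneg _) (by positivity)).trans_eq (by ring)
  have hflim : ∀ t, ∀ᵐ x : ℝ, Tendsto (fun y : ℝ => f t (x + y * I)) (𝓝[>] 0) (𝓝 0) := fun t =>
    hlim.mono fun x hx => by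
      simpa using (((Continuous.tendsto (by fun_prop) 0).mono_left nhdsWithin_le_nhds).mul hx :
        Tendsto (fun y : ℝ => cexp (-(x + y * I) ^ 2 + t * (x + y * I - Y * I) * I)
          * v (x + y * I)) _ _)
  set g : ℝ → ℂ := fun x => f 0 (x + Y * I)
  have hgc : Continuous g := (hf 0).continuousOn.comp_add_mul_I fun x => add_mul_I_mem_UHP x hz
  have hg : g = 0 := by
    have hgi : Integrable g := (integrable_mul_exp_neg_sq _).mono' hgc.aestronglyMeasurable
      (Eventually.of_forall fun x => hbound 0 x Y ⟨hz, le_rfl⟩)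
    refine eq_zero_of_integral_exp_mul_eq_zero hgc hgi fun t => ?_
    rw [← integral_add_mul_I_eq_zero_of_tendsto hz (hf t) (integrable_mul_exp_neg_sq _)
      (tendsto_mul_exp_neg_sq_cocompact _) (hbound t) (hflim t)]
    congr 1 with x
    simp only [hf_def, g, ← mul_assoc, ← Complex.exp_add]
    congr 2
    push_cast
    ring
  simpa [g, hf_def, Y, re_add_im, Complex.exp_ne_zero] using congrFun hg z.re

lemma integral_norm_mul_sq_le {α : Type*} [MeasurableSpace α] {μ : Measure α} {u F : α → ℂ}
    {c C : ℝ} (hc : 0 < c) (hu : ∀ x, c ≤ ‖u x‖ ∧ ‖u x‖ ≤ C) (hF : AEStronglyMeasurable F μ) :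
    ∫ x, ‖u x * F x‖ ^ 2 ∂μ ≤ C ^ 2 * ∫ x, ‖F x‖ ^ 2 ∂μ := by
  by_cases hint : Integrable (fun x => ‖F x‖ ^ 2) μ
  · rw [← integral_const_mul]
    refine integral_mono_of_nonneg (Eventually.of_forall fun x => by positivity)
      (hint.const_mul _) (Eventually.of_forall fun x => ?_)
    simp only [norm_mul, mul_pow]
    gcongr
    exact (hu x).2
  · -- By the lower bound on `u` neither integrand is integrable, so both integrals are `0`.
    have hint' : ¬ Integrable (fun x => ‖u x * F x‖ ^ 2) μ := fun h => hint <|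
      (h.const_mul (c ^ 2)⁻¹).mono' (hF.norm.pow 2) <| Eventually.of_forall fun x => by
        rw [Real.norm_of_nonneg (by positivity), norm_mul, mul_pow, le_inv_mul_iff₀ (by positivity)]
        gcongr
        exact (hu x).1
    rw [integral_undef hint, integral_undef hint', mul_zero]

theorem exists_extension_norm_ge_of_mul_eq_one {d e : ℝ → ℂ} (hd : d ∈ HinfP) (he : e ∈ HinfP)
    (hde : ∀ᵐ x : ℝ, d x * e x = 1) :
    ∃ E : ℂ → ℂ, DifferentiableOn ℂ E UHP ∧ (∃ c > 0, ∀ z ∈ UHP, c ≤ ‖E z‖) ∧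
      (∃ C, ∀ z ∈ UHP, ‖E z‖ ≤ C) ∧
      ∀ᵐ x : ℝ, Tendsto (fun y : ℝ => E (x + y * I)) (𝓝[>] 0) (𝓝 (e x)) := by
  obtain ⟨D, hD, ⟨C, hC⟩, hDlim⟩ := hd
  obtain ⟨E, hE, ⟨C', hC'⟩, hElim⟩ := he
  have hDE : EqOn (fun z => D z * E z - 1) 0 UHP := by
    refine eqOn_zero_of_tendsto_zero ((hD.mul hE).sub_const 1) (M := C * C' + 1) (fun z hz => ?_) ?_
    · refine (norm_sub_le _ _).trans ?_
      rw [norm_mul, norm_one]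
      gcongr
      exacts [(norm_nonneg _).trans (hC z hz), hC z hz, hC' z hz]
    · filter_upwards [hDlim, hElim, hde] with x hDx hEx hx
      simpa [hx] using (hDx.mul hEx).sub_const 1
  refine ⟨E, hE, ⟨(max C 1)⁻¹, by positivity, fun z hz => ?_⟩, ⟨C', hC'⟩, hElim⟩
  have hDEz : ‖D z‖ * ‖E z‖ = 1 := by rw [← norm_mul, sub_eq_zero.1 (hDE hz), norm_one]
  have hD1 : ‖D z‖ ≤ max C 1 := (hC z hz).trans (le_max_left _ _)
  refine (inv_le_iff_one_le_mul₀' (by positivity)).2 ?_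
  calc (1 : ℝ) = ‖D z‖ * ‖E z‖ := hDEz.symm
    _ ≤ max C 1 * ‖E z‖ := by gcongr

theorem mul_mem_H2p {u v f : ℝ → ℂ} (hu : u ∈ HinfP) (hv : v ∈ HinfP)
    (hvu : ∀ᵐ x : ℝ, v x * u x = 1) (hf : f ∈ H2p) : (fun x => u x * f x) ∈ H2p := by
  obtain ⟨E, hE, ⟨c, hc, hcE⟩, ⟨C, hCE⟩, hElim⟩ := exists_extension_norm_ge_of_mul_eq_one hv hu hvu
  obtain ⟨hL2, F, hF, ⟨C', hC'⟩, hFlim⟩ := hf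
  refine ⟨hL2.mul' (memLp_top_of_mem_HinfP hu), fun z => E z * F z, hE.mul hF,
    ⟨C ^ 2 * C', fun y hy => ?_⟩, ?_⟩
  · calc _ ≤ C ^ 2 * ∫ x : ℝ, ‖F (x + y * I)‖ ^ 2 :=
          integral_norm_mul_sq_le hc
            (fun x => ⟨hcE _ (add_mul_I_mem_UHP x hy), hCE _ (add_mul_I_mem_UHP x hy)⟩)
            (hF.continuousOn.comp_add_mul_I fun x => add_mul_I_mem_UHP x hy).aestronglyMeasurable
      _ ≤ C ^ 2 * C' := by gcongr; exact hC' y hy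
  · filter_upwards [hElim, hFlim] with x hEx hFx using hEx.mul hFx

theorem mul_mem_H2m {u v f : ℝ → ℂ} (hu : u ∈ HinfM) (hv : v ∈ HinfM)
    (hvu : ∀ᵐ x : ℝ, v x * u x = 1) (hf : f ∈ H2m) : (fun x => u x * f x) ∈ H2m := by
  simpa using conj_mem_H2m (mul_mem_H2p (conj_mem_HinfP hu) (conj_mem_HinfP hv)
    (hvu.mono fun x hx => by simp [← map_mul, hx]) (conj_mem_H2p hf))

def J₂ (R : Type*) [Ring R] : Matrix (Fin 2) (Fin 2) R := !![0, -1; 1, 0]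

section J₂

variable {R : Type*}

@[simp] lemma J₂_mulVec_zero [Ring R] (u : Fin 2 → R) : (J₂ R *ᵥ u) 0 = -u 1 := by
  simp [J₂, mulVec, dotProduct]

@[simp] lemma J₂_mulVec_one [Ring R] (u : Fin 2 → R) : (J₂ R *ᵥ u) 1 = u 0 := by
  simp [J₂, mulVec, dotProduct]

lemma det_J₂ [CommRing R] : (J₂ R).det = 1 := by
  simp [J₂, det_fin_two]

lemma mul_J₂_mul_transpose [CommRing R] (A : Matrix (Fin 2) (Fin 2) R) :
    A * J₂ R * Aᵀ = A.det • J₂ R := by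
  ext i j
  fin_cases i <;> fin_cases j <;> simp [J₂, det_fin_two, Matrix.mul_apply, Fin.sum_univ_two] <;>
    ring

lemma mulVec_J₂_mulVec_star_conjTranspose_mulVec [CommRing R] [StarRing R]
    (A : Matrix (Fin 2) (Fin 2) R) (v : Fin 2 → R) :
    A *ᵥ (J₂ R *ᵥ star (Aᴴ *ᵥ v)) = A.det • (J₂ R *ᵥ star v) := by
  rw [star_mulVec, conjTranspose_conjTranspose, ← mulVec_transpose, mulVec_mulVec, mulVec_mulVec,
    mul_J₂_mul_transpose, smul_mulVec]

end J₂

lemma J₂_mulVec_star_mem_H2p {u : ℝ → Fin 2 → ℂ} (hu : ∀ i, (fun x => u x i) ∈ H2m)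
    (i : Fin 2) : (fun x => (J₂ ℂ *ᵥ star (u x)) i) ∈ H2p := by
  fin_cases i
  · simpa using neg_mem_H2p (conj_mem_H2p (hu 1))
  · simpa using conj_mem_H2p (hu 0)

lemma J₂_mulVec_star_mem_H2m {u : ℝ → Fin 2 → ℂ} (hu : ∀ i, (fun x => u x i) ∈ H2p)
    (i : Fin 2) : (fun x => (J₂ ℂ *ᵥ star (u x)) i) ∈ H2m := by
  fin_cases i
  · simpa using conj_mem_H2m (neg_mem_H2p (hu 1))
  · simpa using conj_mem_H2m (hu 0)

lemma forall_ae_eq_zero_iff {ι α M : Type*} [Countable ι] [MeasurableSpace α] {μ : Measure α}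
    [Zero M] {φ : ι → α → M} :
    (∀ i, ∀ᵐ x ∂μ, φ i x = 0) ↔ ∀ᵐ x ∂μ, (fun i => φ i x) = 0 := by
  simp only [funext_iff, Pi.zero_apply, ae_all_iff]

theorem kerT2_conjTranspose_trivial_of_kerT2_trivial {G : Matrix (Fin 2) (Fin 2) (ℝ → ℂ)}
    {dm dp em ep : ℝ → ℂ}
    (hdp : dp ∈ HinfP) (hep : ep ∈ HinfP) (hdpe : ∀ᵐ x : ℝ, dp x * ep x = 1)
    (hdm : dm ∈ HinfM) (hem : em ∈ HinfM) (hdme : ∀ᵐ x : ℝ, dm x * em x = 1)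
    (hfact : ∀ᵐ x : ℝ, (Matrix.of fun i j => G i j x).det = dm x * dp x)
    (htriv : ∀ φ ∈ kerT2 G, ∀ i, ∀ᵐ x : ℝ, φ i x = 0) :
    ∀ ψ ∈ kerT2 Gᴴ, ∀ i, ∀ᵐ x : ℝ, ψ i x = 0 := by
  rintro ψ ⟨hψ, hw⟩
  set A : ℝ → Matrix (Fin 2) (Fin 2) ℂ := fun x => Matrix.of fun i j => G i j x
  set w : ℝ → Fin 2 → ℂ := fun x => (A x)ᴴ *ᵥ fun j => ψ j x
  set φ : Fin 2 → ℝ → ℂ := fun i x => ep x * (J₂ ℂ *ᵥ star (w x)) i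
  have hφ : φ ∈ kerT2 G := by
    refine ⟨fun i => mul_mem_H2p hep hdp hdpe (J₂_mulVec_star_mem_H2p hw i), fun i => ?_⟩
    refine mem_H2m_of_ae_eq (mul_mem_H2m hdm hem (by simpa only [mul_comm] using hdme)
      (J₂_mulVec_star_mem_H2m (u := fun x j => ψ j x) hψ i)) ?_
    filter_upwards [hfact, hdpe] with x hdet hinv
    change _ = (A x *ᵥ ep x • (J₂ ℂ *ᵥ star (w x))) i
    rw [mulVec_smul, mulVec_J₂_mulVec_star_conjTranspose_mulVec, hdet]
    simp only [Pi.smul_apply, smul_eq_mul]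
    linear_combination (-(dm x) * (J₂ ℂ *ᵥ star fun j => ψ j x) i) * hinv
  rw [forall_ae_eq_zero_iff]
  filter_upwards [forall_ae_eq_zero_iff.1 (htriv φ hφ), hdpe, hdme, hfact] with x hφx hp hm hdet
  have hep0 : ep x ≠ 0 := right_ne_zero_of_mul_eq_one hp
  have hdet0 : (A x)ᴴ.det ≠ 0 := by
    rw [det_conjTranspose, hdet, star_ne_zero]
    exact mul_ne_zero (left_ne_zero_of_mul_eq_one hm) (left_ne_zero_of_mul_eq_one hp)
  have hJw : J₂ ℂ *ᵥ star (w x) = 0 := by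
    simpa [hep0] using (show ep x • (J₂ ℂ *ᵥ star (w x)) = 0 from hφx)
  have hw0 : w x = 0 := star_eq_zero.1 (eq_zero_of_mulVec_eq_zero (by simp [det_J₂]) hJw)
  exact eq_zero_of_mulVec_eq_zero hdet0 hw0

theorem kerT2_trivial_iff_adjoint_trivial_general
    (G : Matrix (Fin 2) (Fin 2) (ℝ → ℂ))
    (dm dp em ep : ℝ → ℂ)
    (hdp : dp ∈ HinfP) (hep : ep ∈ HinfP)
    (hdpe : ∀ᵐ x : ℝ ∂volume, dp x * ep x = 1)
    (hdm : dm ∈ HinfM) (hem : em ∈ HinfM)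
    (hdme : ∀ᵐ x : ℝ ∂volume, dm x * em x = 1)
    (hfact : ∀ᵐ x : ℝ ∂volume, (Matrix.of fun i j => G i j x).det = dm x * dp x) :
    (∀ φ ∈ kerT2 G, ∀ i, ∀ᵐ x : ℝ ∂volume, φ i x = 0) ↔
    (∀ ψ ∈ kerT2 (Matrix.of fun i j => fun x => starRingEnd ℂ (G j i x)),
      ∀ i, ∀ᵐ x : ℝ ∂volume, ψ i x = 0) := by
  refine ⟨kerT2_conjTranspose_trivial_of_kerT2_trivial hdp hep hdpe hdm hem hdme hfact, fun h => ?_⟩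
  have hfact' : ∀ᵐ x : ℝ, (Matrix.of fun i j => Gᴴ i j x).det = conj (dp x) * conj (dm x) :=
    hfact.mono fun x hx => by
      rw [show (Matrix.of fun i j => Gᴴ i j x) = (Matrix.of fun i j => G i j x)ᴴ from rfl,
        det_conjTranspose, hx, star_mul]
      rfl
  have hconj : ∀ {d e : ℝ → ℂ}, (∀ᵐ x : ℝ, d x * e x = 1) →
      ∀ᵐ x : ℝ, conj (d x) * conj (e x) = 1 :=
    fun hde => hde.mono fun x hx => by rw [← map_mul, hx, map_one]
  simpa only [conjTranspose_conjTranspose] using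
    kerT2_conjTranspose_trivial_of_kerT2_trivial (G := Gᴴ) (conj_mem_HinfP hdm)
      (conj_mem_HinfP hem) (hconj hdme) (conj_mem_HinfM hdp) (conj_mem_HinfM hep) (hconj hdpe)
      hfact' h

/-- If `G ∈ L∞^{2×2}` and `det G = d₋d₊` with `d±` invertible in `H∞±`, then
`ker T_G = {0}` if and only if `ker T_{Ḡᵀ} = {0}`. -/
theorem kerT2_trivial_iff_adjoint_trivial
    (G : Matrix (Fin 2) (Fin 2) (ℝ → ℂ))
    (hG : ∀ i j, MemLp (G i j) ⊤ (volume : Measure ℝ))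
    (dm dp em ep : ℝ → ℂ)
    (hdp : dp ∈ HinfP) (hep : ep ∈ HinfP)
    (hdpe : ∀ᵐ x : ℝ ∂volume, dp x * ep x = 1)
    (hdm : dm ∈ HinfM) (hem : em ∈ HinfM)
    (hdme : ∀ᵐ x : ℝ ∂volume, dm x * em x = 1)
    (hfact : ∀ᵐ x : ℝ ∂volume, (Matrix.of fun i j => G i j x).det = dm x * dp x) :
    (∀ φ ∈ kerT2 G, ∀ i, ∀ᵐ x : ℝ ∂volume, φ i x = 0) ↔
    (∀ ψ ∈ kerT2 (Matrix.of fun i j => fun x => starRingEnd ℂ (G j i x)),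
      ∀ i, ∀ᵐ x : ℝ ∂volume, ψ i x = 0) :=
  kerT2_trivial_iff_adjoint_trivial_general G dm dp em ep hdp hep hdpe hdm hem hdme hfact
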